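/- Let p ∈ (0,1]. For each positive integer k, let T(k) be the perfect binary tree of depth k, and let S be a random set of vertices of T(k) that contains the root of T(k) and contains each other vertex of T(k) independently with probability p. Then the probability that S is exponentially independent in T(k) tends to 0 as k → ∞. -/

import Mathlib

open SimpleGraph
open scoped Classical

/-- The graph obtained from `G` by deleting the vertices of `A`
(they are kept as isolated vertices, which does not affect adjacency or distances
among the remaining vertices). -/
def SimpleGraph.deleteSet {V : Type*} (G : SimpleGraph V) (A : Set V) : SimpleGraph V where
  Adj x y := G.Adj x y ∧ x ∉ A ∧ y ∉ A
  symm := ⟨fun _ _ ⟨h, hx, hy⟩ => ⟨h.symm, hy, hx⟩⟩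
  loopless := ⟨fun x ⟨h, _, _⟩ => G.loopless.irrefl x h⟩

/-- `dist_{(G,S)}(u,v)`: the distance between `u` and `v` in `G - (S \ {u,v})`,
with value `⊤` if `u` and `v` lie in different components of that graph. -/
noncomputable def distDel {V : Type*} (G : SimpleGraph V) (S : Set V) (u v : V) : ℕ∞ :=
  (G.deleteSet (S \ {u, v})).edist u v

/-- `w_{(G,S)}(u) = Σ_{v ∈ S} (1/2)^{dist_{(G,S)}(u,v) - 1}` for a finite set `S`,
where a summand with infinite distance equals `0`. -/
noncomputable def expW {V : Type*} (G : SimpleGraph V) (S : Finset V) (u : V) : ℝ :=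
  ∑ v ∈ S, if distDel G (↑S) u v = ⊤ then 0
    else 2 * (1 / 2 : ℝ) ^ (distDel G (↑S) u v).toNat

/-- `S` is exponentially independent in `G`: `w_{(G,S∖{u})}(u) < 1` for every `u ∈ S`. -/
def ExpIndep {V : Type*} (G : SimpleGraph V) (S : Finset V) : Prop :=
  ∀ u ∈ S, expW G (S.erase u) u < 1

/-- The exponential independence number of `G`: the maximum cardinality of an
exponentially independent set in `G`. -/
noncomputable def expIndepNum (V : Type*) [Fintype V] (G : SimpleGraph V) : ℕ :=
  sSup {m : ℕ | ∃ S : Finset V, ExpIndep G S ∧ S.card = m}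

/-- The perfect binary tree of depth `k`, with vertices indexed as in a binary heap:
in `1`-based indexing, the children of vertex `i` are `2i` and `2i + 1`; the root is
vertex `1` (index `0`), and its order is `2^(k+1) - 1`. -/
def pbt (k : ℕ) : SimpleGraph (Fin (2 ^ (k + 1) - 1)) :=
  SimpleGraph.fromRel (fun x y =>
    (y : ℕ) + 1 = 2 * ((x : ℕ) + 1) ∨ (y : ℕ) + 1 = 2 * ((x : ℕ) + 1) + 1)

/-- The root of the perfect binary tree of depth `k`. -/
def pbtRoot (k : ℕ) : Fin (2 ^ (k + 1) - 1) :=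
  ⟨0, by have : 1 < 2 ^ (k + 1) := Nat.one_lt_two_pow_iff.mpr (by omega); omega⟩

/-!
If `S` contains two adjacent vertices `u, v`, then `v` alone contributes `(1/2)^0 = 1` to
`w(u)`, so an exponentially independent set contains no edge. The leftmost branch of `T(k)`
carries `⌊k/2⌋` vertex-disjoint edges avoiding the root; each lies in `S` with probability
`p²`, independently of the others, so the probability is at most `(1 - p²)^⌊k/2⌋ → 0`.
-/

/-- The expectation of `f S` for a random subset `S` of `U` containing each element
independently with probability `p`. -/
noncomputable def bernoulliExp {V : Type*} (p : ℝ) (U : Finset V) (f : Finset V → ℝ) : ℝ :=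
  ∑ A ∈ U.powerset, p ^ A.card * (1 - p) ^ (U.card - A.card) * f A

section BernoulliExp

variable {V : Type*} {p : ℝ}

lemma bernoulliExp_nonneg (hp0 : 0 ≤ p) (hp1 : p ≤ 1) (U : Finset V) {f : Finset V → ℝ}
    (hf : ∀ A, 0 ≤ f A) : 0 ≤ bernoulliExp p U f :=
  Finset.sum_nonneg fun A _ =>
    mul_nonneg (mul_nonneg (pow_nonneg hp0 _) (pow_nonneg (sub_nonneg.mpr hp1) _)) (hf A)

variable [DecidableEq V]

lemma bernoulliExp_insert {a : V} {U : Finset V} (ha : a ∉ U) (f : Finset V → ℝ) :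
    bernoulliExp p (insert a U) f =
      p * bernoulliExp p U (fun A => f (insert a A)) + (1 - p) * bernoulliExp p U f := by
  unfold bernoulliExp
  rw [Finset.sum_powerset_insert ha, Finset.mul_sum, Finset.mul_sum, add_comm]
  congr 1 <;> refine Finset.sum_congr rfl fun A hA => ?_
  all_goals
    have hAU : A.card ≤ U.card := Finset.card_le_card (Finset.mem_powerset.mp hA)
    have haA : a ∉ A := fun h => ha (Finset.mem_powerset.mp hA h)
    rw [Finset.card_insert_of_notMem ha]
  · rw [Finset.card_insert_of_notMem haA, Nat.add_sub_add_right]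
    ring
  · rw [show U.card + 1 - A.card = U.card - A.card + 1 by omega]
    ring

lemma bernoulliExp_le_one (hp0 : 0 ≤ p) (hp1 : p ≤ 1) (U : Finset V) {f : Finset V → ℝ}
    (hf : ∀ A, f A ≤ 1) : bernoulliExp p U f ≤ 1 := by
  induction U using Finset.induction_on generalizing f with
  | empty => simpa [bernoulliExp] using hf ∅
  | insert a U ha ih =>
    rw [bernoulliExp_insert ha]
    nlinarith [ih (f := fun A => f (insert a A)) fun A => hf _, ih hf]

lemma bernoulliExp_le_of_vanish_of_pair_subset (hp0 : 0 ≤ p) (hp1 : p ≤ 1) (v : ℕ → V)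
    (m : ℕ) (U : Finset V) (hvU : ∀ j < 2 * m, v j ∈ U) (hv : Set.InjOn v (Set.Iio (2 * m)))
    (f : Finset V → ℝ) (hf0 : ∀ A, 0 ≤ f A) (hf1 : ∀ A, f A ≤ 1)
    (hf : ∀ A, ∀ i < m, v (2 * i) ∈ A → v (2 * i + 1) ∈ A → f A = 0) :
    bernoulliExp p U f ≤ (1 - p ^ 2) ^ m := by
  induction m generalizing U f with
  | zero => simpa using bernoulliExp_le_one hp0 hp1 U hf1
  | succ m ih =>
    set a := v (2 * m)
    set b := v (2 * m + 1)
    have hv_ne {j j' : ℕ} (hj : j < 2 * (m + 1)) (hj' : j' < 2 * (m + 1)) (hne : j ≠ j') :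
        v j ≠ v j' := fun h => hne (hv hj hj' h)
    set U' := (U.erase a).erase b
    have hbU' : b ∉ U' := Finset.notMem_erase b _
    have haU' : a ∉ insert b U' := by
      simpa [U'] using hv_ne (j := 2 * m) (j' := 2 * m + 1) (by omega) (by omega) (by omega)
    have hU : U = insert a (insert b U') := by
      rw [Finset.insert_erase (Finset.mem_erase.mpr
          ⟨hv_ne (by omega) (by omega) (by omega), hvU _ (by omega)⟩),
        Finset.insert_erase (hvU _ (by omega))]
    have hIH (g : Finset V → ℝ) (hg : ∀ A, g A = f A ∨ g A = f (insert a A) ∨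
        g A = f (insert b A)) : bernoulliExp p U' g ≤ (1 - p ^ 2) ^ m := by
      refine ih U' (fun j hj => ?_) (hv.mono (Set.Iio_subset_Iio (by omega))) g
        (fun A => by rcases hg A with h | h | h <;> rw [h] <;> apply hf0)
        (fun A => by rcases hg A with h | h | h <;> rw [h] <;> apply hf1)
        (fun A i hi ha hb => ?_)
      · simp only [U', Finset.mem_erase]
        exact ⟨hv_ne (by omega) (by omega) (by omega), hv_ne (by omega) (by omega) (by omega),
          hvU j (by omega)⟩
      · rcases hg A with h | h | h <;> rw [h] <;>
          exact hf _ i (by omega) (by simp [ha]) (by simp [hb])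
    have hboth : bernoulliExp p U' (fun A => f (insert a (insert b A))) = 0 :=
      Finset.sum_eq_zero fun A _ => mul_eq_zero_of_right _ <| hf _ m (by omega)
        (Finset.mem_insert_self _ _) (Finset.mem_insert_of_mem (Finset.mem_insert_self _ _))
    have ha_only := hIH _ fun A => Or.inr (Or.inl rfl)
    have hb_only := hIH _ fun A => Or.inr (Or.inr rfl)
    have hnone := hIH f fun A => Or.inl rfl
    rw [hU, bernoulliExp_insert haU', bernoulliExp_insert hbU', bernoulliExp_insert hbU', hboth]
    calc p * (p * 0 + (1 - p) * bernoulliExp p U' fun A => f (insert a A)) +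
          (1 - p) * (p * bernoulliExp p U' (fun A => f (insert b A)) +
            (1 - p) * bernoulliExp p U' f)
        ≤ p * (p * 0 + (1 - p) * (1 - p ^ 2) ^ m) +
          (1 - p) * (p * (1 - p ^ 2) ^ m + (1 - p) * (1 - p ^ 2) ^ m) := by gcongr
      _ = (1 - p ^ 2) ^ (m + 1) := by ring

end BernoulliExp

lemma not_expIndep_of_adj {V : Type*} {G : SimpleGraph V} {S : Finset V} {u v : V}
    (hu : u ∈ S) (hv : v ∈ S) (huv : G.Adj u v) : ¬ ExpIndep G S := by
  intro h
  have hdist : distDel G (↑(S.erase u)) u v = 1 :=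
    edist_eq_one_iff_adj.mpr ⟨huv, fun h => h.2 (by simp), fun h => h.2 (by simp)⟩
  have hle : 1 ≤ expW G (S.erase u) u := by
    refine le_of_eq_of_le ?_ (Finset.single_le_sum (fun w _ => ?_)
      (Finset.mem_erase.mpr ⟨huv.ne.symm, hv⟩))
    · simp only [hdist]
      norm_num
    · split_ifs <;> positivity
  exact (h u hu).not_ge hle

/-- The vertex at depth `d` on the leftmost branch of `T(k)` (clamped at depth `k`). -/
def pbtLeftSpine (k d : ℕ) : Fin (2 ^ (k + 1) - 1) :=
  ⟨2 ^ min d k - 1, by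
    have := Nat.pow_le_pow_right two_pos (min_le_right d k)
    have := Nat.one_le_two_pow (n := min d k)
    rw [pow_succ]
    omega⟩

lemma pbtLeftSpine_injOn (k : ℕ) : Set.InjOn (pbtLeftSpine k) (Set.Iic k) := by
  intro d hd d' hd' h
  simp only [pbtLeftSpine, Fin.mk.injEq, min_eq_left (Set.mem_Iic.mp hd),
    min_eq_left (Set.mem_Iic.mp hd')] at h
  have := Nat.one_le_two_pow (n := d)
  have := Nat.one_le_two_pow (n := d')
  exact Nat.pow_right_injective le_rfl (show 2 ^ d = 2 ^ d' by omega)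

lemma pbtLeftSpine_ne_root {k d : ℕ} (hd : 0 < d) (hdk : d ≤ k) :
    pbtLeftSpine k d ≠ pbtRoot k := by
  intro h
  have h := congrArg Fin.val h
  have := Nat.one_lt_two_pow (n := min d k) (by omega)
  simp only [pbtLeftSpine, pbtRoot] at h
  omega

lemma pbt_adj_pbtLeftSpine {k d : ℕ} (hd : d < k) :
    (pbt k).Adj (pbtLeftSpine k d) (pbtLeftSpine k (d + 1)) := by
  have := Nat.one_le_two_pow (n := d)
  refine fromRel_adj _ _ _ |>.mpr ⟨?_, Or.inl (Or.inl ?_)⟩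
  · exact (pbtLeftSpine_injOn k).ne (Set.mem_Iic.mpr hd.le) (Set.mem_Iic.mpr hd) (by omega)
  · simp only [pbtLeftSpine, min_eq_left hd.le, min_eq_left (Nat.succ_le_of_lt hd), pow_succ]
    omega

lemma pbt_bernoulliExp_expIndep_le {p : ℝ} (hp0 : 0 ≤ p) (hp1 : p ≤ 1) (k : ℕ) :
    bernoulliExp p (Finset.univ.erase (pbtRoot k))
        (fun A => if ExpIndep (pbt k) (insert (pbtRoot k) A) then 1 else 0)
      ≤ (1 - p ^ 2) ^ (k / 2) := by
  refine bernoulliExp_le_of_vanish_of_pair_subset hp0 hp1 (fun j => pbtLeftSpine k (j + 1))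
    (k / 2) _ (fun j hj => Finset.mem_erase.mpr ⟨pbtLeftSpine_ne_root (by omega) (by omega),
      Finset.mem_univ _⟩) (fun j hj j' hj' h => ?_) _ (fun A => by split_ifs <;> norm_num)
    (fun A => by split_ifs <;> norm_num) (fun A i hi ha hb => if_neg ?_)
  · simpa using (pbtLeftSpine_injOn k) (Set.mem_Iic.mpr (by simp at hj; omega))
      (Set.mem_Iic.mpr (by simp at hj'; omega)) h
  · exact not_expIndep_of_adj (Finset.mem_insert_of_mem ha) (Finset.mem_insert_of_mem hb)
      (pbt_adj_pbtLeftSpine (by omega))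

/-- If `p ∈ (0,1]` and, for each `k`, `S` is a random set of vertices of the perfect
binary tree `T(k)` of depth `k` containing the root and containing every other vertex
independently with probability `p`, then the probability that `S` is exponentially
independent in `T(k)` tends to `0` as `k → ∞`.  The probability is written out as the
sum, over all sets `A` of non-root vertices, of the product Bernoulli weight of `A`
times the indicator that `{root} ∪ A` is exponentially independent. -/
theorem stmt14 (p : ℝ) (hp0 : 0 < p) (hp1 : p ≤ 1) :
    Filter.Tendsto (fun k : ℕ =>
      ∑ A ∈ (Finset.univ.erase (pbtRoot k)).powerset,
        p ^ A.card * (1 - p) ^ ((Finset.univ.erase (pbtRoot k)).card - A.card) *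
          (if ExpIndep (pbt k) (insert (pbtRoot k) A) then (1 : ℝ) else 0))
      Filter.atTop (nhds 0) := by
  have hq0 : 0 ≤ 1 - p ^ 2 := by nlinarith
  have hq1 : 1 - p ^ 2 < 1 := by nlinarith
  exact squeeze_zero
    (fun k => bernoulliExp_nonneg hp0.le hp1 _ fun A => by split_ifs <;> norm_num)
    (fun k => pbt_bernoulliExp_expIndep_le hp0.le hp1 k)
    ((tendsto_pow_atTop_nhds_zero_of_lt_one hq0 hq1).comp
      (Nat.tendsto_div_const_atTop two_ne_zero))
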